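/- Let A be an n×n Hermitian complex matrix with spectral resolution A = λ₁P₁ + ⋯ + λ_rP_r, where λ₁,…,λ_r are distinct real numbers and P₁,…,P_r are Hermitian matrices satisfying P_iP_j = P_j if i = j, P_iP_j = 0 if i ≠ j, and P₁ + ⋯ + P_r = I, and let B be an n×n Hermitian positive semidefinite matrix. Define K := Σ_{i≠j} P_i B P_j / (λ_i − λ_j). Then [KA]^s + B ≥ (1/2) Σ_{j=1}^{r} P_j B P_j, i.e., the Hermitian matrix [KA]^s + B − (1/2)Σ_j P_j B P_j is positive semidefinite, where [M]^s := (1/2)(M + M*). -/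

import Mathlib

open Matrix Finset
open scoped ComplexOrder

/-- The Hermitian part `[M]ˢ = (1/2)(M + Mᴴ)` of a complex square matrix. -/
noncomputable def hermPart {n : ℕ} (M : Matrix (Fin n) (Fin n) ℂ) :
    Matrix (Fin n) (Fin n) ℂ :=
  (1 / 2 : ℂ) • (M + Mᴴ)

/-!
`A` commutes with every `Pⱼ` and `K` is skew-Hermitian, so `[KA]ˢ = ½(KA − AK)`. On the block
`Pᵢ B Pⱼ` the commutator with `A` multiplies by `λⱼ − λᵢ`, which the weight `(λᵢ − λⱼ)⁻¹` cancels: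
`KA − AK = ∑ⱼ Pⱼ B Pⱼ − B`. Hence the left-hand side is exactly `½ B ≥ 0`.
-/

theorem Finset.sum_sum_offDiag_eq_sub {ι M : Type*} [Fintype ι] [DecidableEq ι] [AddCommGroup M]
    (X : ι → ι → M) :
    ∑ i, ∑ j, (if i = j then 0 else X i j) = ∑ i, ∑ j, X i j - ∑ i, X i i := by
  rw [← sum_sub_distrib]
  refine sum_congr rfl fun i _ => ?_
  rw [sum_ite, sum_const_zero, zero_add, filter_ne,
    sum_erase_eq_sub (mem_univ i)]

variable {ι R 𝕜 : Type*} [Fintype ι]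

namespace OrthogonalIdempotents

variable [Field 𝕜] [Ring R] [Algebra 𝕜 R] {P : ι → R} {l : ι → 𝕜} {A : R}

theorem mul_spectral_eq_smul (hP : OrthogonalIdempotents P) (hA : A = ∑ k, l k • P k)
    (X : R) (j : ι) :
    X * P j * A = l j • (X * P j) := by
  rw [hA, mul_assoc, mul_sum, sum_eq_single j]
  · rw [mul_smul_comm, (hP.idem j).eq, mul_smul_comm]
  · intro k _ hk
    rw [mul_smul_comm, hP.ortho hk.symm, smul_zero]
  · simp

theorem spectral_mul_eq_smul (hP : OrthogonalIdempotents P) (hA : A = ∑ k, l k • P k)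
    (X : R) (i : ι) :
    A * (P i * X) = l i • (P i * X) := by
  rw [hA, ← mul_assoc, sum_mul, sum_eq_single i]
  · rw [smul_mul_assoc, (hP.idem i).eq, smul_mul_assoc]
  · intro k _ hk
    rw [smul_mul_assoc, hP.ortho hk, smul_zero]
  · simp

end OrthogonalIdempotents

theorem CompleteOrthogonalIdempotents.sum_sum_mul_mul [Ring R] {P : ι → R}
    (hP : CompleteOrthogonalIdempotents P) (B : R) : ∑ i, ∑ j, P i * B * P j = B := by
  simp only [← sum_mul, ← mul_sum, hP.complete, one_mul, mul_one]

section Compensator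

variable [DecidableEq ι] [Field 𝕜] [Ring R] [Algebra 𝕜 R]

noncomputable def compensator (l : ι → 𝕜) (P : ι → R) (B : R) : R :=
  ∑ i, ∑ j, if i = j then 0 else (l i - l j)⁻¹ • (P i * B * P j)

theorem compensator_mul_sub_mul_compensator {l : ι → 𝕜} (hl : Function.Injective l) {P : ι → R}
    (hP : CompleteOrthogonalIdempotents P) {A : R} (hA : A = ∑ k, l k • P k) (B : R) :
    compensator l P B * A - A * compensator l P B = ∑ j, P j * B * P j - B := by
  have hoff : compensator l P B * A - A * compensator l P B =
      ∑ i, ∑ j, if i = j then 0 else -(P i * B * P j) := by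
    simp only [compensator, sum_mul, mul_sum, ← sum_sub_distrib]
    refine sum_congr rfl fun i _ => sum_congr rfl fun j _ => ?_
    split_ifs with hij
    · simp
    rw [smul_mul_assoc, mul_smul_comm, hP.mul_spectral_eq_smul hA, mul_assoc (P i),
      hP.spectral_mul_eq_smul hA, ← mul_assoc, smul_smul, smul_smul, ← sub_smul,
      ← mul_sub, ← neg_sub (l i), mul_neg, inv_mul_cancel₀ (sub_ne_zero.2 (hl.ne hij)),
      neg_one_smul]
  rw [hoff, sum_sum_offDiag_eq_sub fun i j => -(P i * B * P j)]
  simp only [sum_neg_distrib, hP.sum_sum_mul_mul]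
  abel

end Compensator

section StarRing

variable [DecidableEq ι] [Ring R] [StarRing R] [Algebra ℂ R] [StarModule ℂ R] {P : ι → R}

omit [DecidableEq ι] in
theorem isSelfAdjoint_sum_ofReal_smul (hP : ∀ j, IsSelfAdjoint (P j)) (l : ι → ℝ) :
    IsSelfAdjoint (∑ j, (l j : ℂ) • P j) :=
  isSelfAdjoint_sum _ fun j _ => IsSelfAdjoint.smul (Complex.conj_ofReal (l j)) (hP j)

theorem star_compensator_ofReal (hP : ∀ j, IsSelfAdjoint (P j)) (l : ι → ℝ) {B : R}
    (hB : IsSelfAdjoint B) :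
    star (compensator (fun i => (l i : ℂ)) P B) = -compensator (fun i => (l i : ℂ)) P B := by
  unfold compensator
  simp only [star_sum, apply_ite star, star_zero, star_smul, star_mul, hB.star_eq, (hP _).star_eq,
    ← Complex.ofReal_sub, ← Complex.ofReal_inv, Complex.star_def, Complex.conj_ofReal]
  rw [sum_comm, ← sum_neg_distrib]
  refine sum_congr rfl fun i _ => ?_
  rw [← sum_neg_distrib]
  refine sum_congr rfl fun j _ => ?_
  by_cases hij : i = j
  · simp [hij]
  rw [if_neg (Ne.symm hij), if_neg hij, ← neg_sub (l i), inv_neg, Complex.ofReal_neg, neg_smul,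
    mul_assoc]

end StarRing

/-- With `A = ∑ λⱼ • Pⱼ` a Hermitian spectral resolution and `B`
Hermitian positive semidefinite, the compensating matrix
`K := ∑_{i ≠ j} (λᵢ - λⱼ)⁻¹ • Pᵢ B Pⱼ` satisfies `[K A]ˢ + B ≥ (1/2) ∑ⱼ Pⱼ B Pⱼ`. -/
theorem compensator_lower_bound (n r : ℕ)
    (A : Matrix (Fin n) (Fin n) ℂ) (l : Fin r → ℝ)
    (P : Fin r → Matrix (Fin n) (Fin n) ℂ)
    (hdist : Function.Injective l)
    (hPherm : ∀ j, (P j).IsHermitian)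
    (hPP : ∀ i j, P i * P j = if i = j then P j else 0)
    (hsum : ∑ j, P j = 1)
    (hA : A = ∑ j, (l j : ℂ) • P j)
    (B : Matrix (Fin n) (Fin n) ℂ) (hB : B.PosSemidef) :
    (hermPart ((∑ i, ∑ j, if i = j then 0 else
          ((l i : ℂ) - (l j : ℂ))⁻¹ • (P i * B * P j)) * A) + B -
      (1 / 2 : ℂ) • ∑ j, P j * B * P j).PosSemidef := by
  have hP : CompleteOrthogonalIdempotents P :=
    ⟨OrthogonalIdempotents.iff_mul_eq.2 fun i j => by rw [hPP]; split_ifs with h <;> simp [h], hsum⟩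
  set K := compensator (fun i => (l i : ℂ)) P B
  change (hermPart (K * A) + B - _).PosSemidef
  have hcomm : K * A - A * K = ∑ j, P j * B * P j - B :=
    compensator_mul_sub_mul_compensator (Complex.ofReal_injective.comp hdist) hP hA B
  have hAsa : IsSelfAdjoint A := hA ▸ isSelfAdjoint_sum_ofReal_smul hPherm l
  have hKA : K * A + (K * A)ᴴ = K * A - A * K := by
    rw [← star_eq_conjTranspose, star_mul, star_compensator_ofReal hPherm l hB.1, hAsa.star_eq,
      mul_neg, sub_eq_add_neg]
  have hhalf : hermPart (K * A) + B - (1 / 2 : ℂ) • ∑ j, P j * B * P j = (1 / 2 : ℂ) • B := by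
    rw [hermPart, hKA, hcomm]
    module
  rw [hhalf]
  exact hB.smul (by norm_num [Complex.le_def])
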